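/- arXiv:1509.01841 — 2 statements merged into one kernel-verified Lean document; each statement's English description precedes it below -/
import Mathlib

section
/- The edge-balanced index set of K_{m,2} is {0} for every even integer m ≥ 2; that is, every edge-friendly labeling of K_{m,2} has v(1) = v(0). -/
/-- The edge-balanced index set of `K_{m,2}` is `{0}` for every even `m ≥ 2`:
every edge-friendly labeling of `K_{m,2}` has `v(1) = v(0)`. -/
theorem stmt_14 (m : ℕ) (hm : Even m) (hm2 : 2 ≤ m)
    (f : Fin m × Fin 2 → Bool)
    (hf : |((Finset.univ.filter fun e => f e = true).card : ℤ) -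
           ((Finset.univ.filter fun e => f e = false).card : ℤ)| ≤ 1) :
    (Finset.univ.filter fun v : Fin m =>
        2 / 2 < (Finset.univ.filter fun u : Fin 2 => f (v, u) = true).card).card +
      (Finset.univ.filter fun u : Fin 2 =>
        m / 2 < (Finset.univ.filter fun v : Fin m => f (v, u) = true).card).card =
    (Finset.univ.filter fun v : Fin m =>
        2 / 2 < (Finset.univ.filter fun u : Fin 2 => f (v, u) = false).card).card +
      (Finset.univ.filter fun u : Fin 2 =>
        m / 2 < (Finset.univ.filter fun v : Fin m => f (v, u) = false).card).card := by
  classical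
  obtain ⟨k, hk⟩ := hm
  -- notation
  set t0 : ℕ := (Finset.univ.filter fun v : Fin m => f (v, 0) = true).card with ht0
  set t1 : ℕ := (Finset.univ.filter fun v : Fin m => f (v, 1) = true).card with ht1
  set A : ℕ := (Finset.univ.filter fun v : Fin m => f (v, 0) = true ∧ f (v, 1) = true).card with hA
  set B : ℕ := (Finset.univ.filter fun v : Fin m => f (v, 0) = false ∧ f (v, 1) = false).card with hB
  have ht0le : t0 ≤ m := by
    rw [ht0]
    calc _ ≤ (Finset.univ : Finset (Fin m)).card := Finset.card_filter_le _ _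
    _ = m := by simp
  have ht1le : t1 ≤ m := by
    rw [ht1]
    calc _ ≤ (Finset.univ : Finset (Fin m)).card := Finset.card_filter_le _ _
    _ = m := by simp
  -- count of false edges at a given u
  have hfu : ∀ u : Fin 2, (Finset.univ.filter fun v : Fin m => f (v, u) = false).card
      = m - (Finset.univ.filter fun v : Fin m => f (v, u) = true).card := by
    intro u
    have h := Finset.card_filter_add_card_filter_not
      (s := (Finset.univ : Finset (Fin m))) (p := fun v => f (v, u) = true)
    simp only [Bool.not_eq_true, Finset.card_univ, Fintype.card_fin] at h
    omega
  -- total true edges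
  have hT : (Finset.univ.filter fun e : Fin m × Fin 2 => f e = true).card = t0 + t1 := by
    rw [Finset.card_filter, Fintype.sum_prod_type, ht0, ht1]
    simp only [Finset.card_filter]
    rw [← Finset.sum_add_distrib]
    refine Finset.sum_congr rfl fun v _ => ?_
    rw [Fin.sum_univ_two]
  have hTF : (Finset.univ.filter fun e : Fin m × Fin 2 => f e = false).card = 2 * m - (t0 + t1) := by
    have h := Finset.card_filter_add_card_filter_not
      (s := (Finset.univ : Finset (Fin m × Fin 2))) (p := fun e => f e = true)
    simp only [Bool.not_eq_true, Finset.card_univ, Fintype.card_prod, Fintype.card_fin] at h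
    omega
  -- friendliness forces t0 + t1 = m
  have hsum : t0 + t1 = m := by
    rw [hT, hTF, abs_le] at hf
    obtain ⟨hl, hr⟩ := hf
    omega
  -- identify the Fin m vertex counts
  have e1 : (Finset.univ.filter fun v : Fin m =>
      2 / 2 < (Finset.univ.filter fun u : Fin 2 => f (v, u) = true).card).card = A := by
    rw [hA]
    congr 1
    apply Finset.filter_congr
    intro v _
    rw [Finset.card_filter, Fin.sum_univ_two]
    cases h0 : f (v, 0) <;> cases h1 : f (v, 1) <;> simp [h0, h1]
  have e2 : (Finset.univ.filter fun v : Fin m =>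
      2 / 2 < (Finset.univ.filter fun u : Fin 2 => f (v, u) = false).card).card = B := by
    rw [hB]
    congr 1
    apply Finset.filter_congr
    intro v _
    rw [Finset.card_filter, Fin.sum_univ_two]
    cases h0 : f (v, 0) <;> cases h1 : f (v, 1) <;> simp [h0, h1]
  -- A = B
  have key : A + m = B + (t0 + t1) := by
    have h : ∑ v : Fin m, (((if f (v, 0) = true ∧ f (v, 1) = true then 1 else 0) + 1 : ℕ))
        = ∑ v : Fin m, ((if f (v, 0) = false ∧ f (v, 1) = false then 1 else 0)
          + ((if f (v, 0) = true then 1 else 0) + (if f (v, 1) = true then 1 else 0))) := by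
      refine Finset.sum_congr rfl fun v _ => ?_
      cases h0 : f (v, 0) <;> cases h1 : f (v, 1) <;> simp [h0, h1]
    rw [hA, hB, ht0, ht1]
    simp only [Finset.card_filter]
    simpa [Finset.sum_add_distrib] using h
  have hAB : A = B := by omega
  -- the Fin 2 vertex counts
  have e3 : (Finset.univ.filter fun u : Fin 2 =>
      m / 2 < (Finset.univ.filter fun v : Fin m => f (v, u) = true).card).card
      = (if m / 2 < t0 then 1 else 0) + (if m / 2 < t1 then 1 else 0) := by
    rw [Finset.card_filter, Fin.sum_univ_two, ht0, ht1]
  have e4 : (Finset.univ.filter fun u : Fin 2 =>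
      m / 2 < (Finset.univ.filter fun v : Fin m => f (v, u) = false).card).card
      = (if m / 2 < m - t0 then 1 else 0) + (if m / 2 < m - t1 then 1 else 0) := by
    rw [Finset.card_filter, Fin.sum_univ_two, hfu 0, hfu 1, ht0, ht1]
  rw [e1, e2, e3, e4, hAB]
  have hk2 : m = k + k := hk
  split_ifs <;> omega
end

section
/- For even integers m ≥ n ≥ 4, ⌊mn/(n+2)⌋ + ⌊mn/(m+2)⌋ ≥ (m+n)/2 + 2 whenever (m,n) ≠ (4,4), so 2(⌊mn/(n+2)⌋ + ⌊mn/(m+2)⌋) − m − n ≥ 4. -/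
/-- For even integers `m ≥ n ≥ 4` with `(m,n) ≠ (4,4)`:
`⌊mn/(n+2)⌋ + ⌊mn/(m+2)⌋ ≥ (m+n)/2 + 2`, so
`2(⌊mn/(n+2)⌋ + ⌊mn/(m+2)⌋) − m − n ≥ 4`. -/
theorem stmt_17 (m n : ℕ) (hm : Even m) (hn : Even n) (hmn : n ≤ m) (hn4 : 4 ≤ n)
    (h44 : ¬(m = 4 ∧ n = 4)) :
    (m + n) / 2 + 2 ≤ m * n / (n + 2) + m * n / (m + 2) ∧
      (4 : ℤ) ≤ 2 * ((m * n / (n + 2) : ℕ) + (m * n / (m + 2) : ℕ)) - m - n := by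
  obtain ⟨a, ha⟩ := hm
  obtain ⟨b, hb⟩ := hn
  subst ha hb
  have hb2 : 2 ≤ b := by omega
  have hab : b ≤ a := by omega
  have key : a + b + 1 ≤ a * b := by
    rcases Nat.lt_or_ge b 3 with h | h
    · have hb' : b = 2 := by omega
      have ha3 : 3 ≤ a := by omega
      subst hb'; omega
    · nlinarith
  have h1 : a + 1 ≤ (a + a) * (b + b) / (b + b + 2) := by
    rw [Nat.le_div_iff_mul_le (by omega)]
    nlinarith
  have h2 : b + 1 ≤ (a + a) * (b + b) / (a + a + 2) := by
    rw [Nat.le_div_iff_mul_le (by omega)]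
    nlinarith
  have hsum : a + b + 2 ≤ (a + a) * (b + b) / (b + b + 2) + (a + a) * (b + b) / (a + a + 2) := by
    omega
  constructor
  · omega
  · generalize (a + a) * (b + b) / (b + b + 2) = k at hsum ⊢
    generalize (a + a) * (b + b) / (a + a + 2) = j at hsum ⊢
    push_cast
    omega
end
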